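/- arXiv:2002.01023 — 7 statements merged into one kernel-verified Lean document; each statement's English description precedes it below -/
import Mathlib

section
/- For the LTI system x(t+1) = A x(t) + B u(t), y(t) = C x(t) + D u(t), any linear combination of the columns of the stacked Hankel matrix [H_L(u); H_L(y)] built from an input/output trajectory (u, y) of length T is again a length-L input/output trajectory of the system. That is, if (ū, ȳ) = [H_L(u); H_L(y)] g for some real vector g, then there exists a state sequence x̄ such that (ū, x̄, ȳ) satisfies the system equations on [0, L−1]. -/
/-!
Input/output trajectories of length `L` form a linear space (the system equations are linear in
`(u, x, y)`), and by time invariance every length-`L` window of a length-`T` trajectory is a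
length-`L` trajectory. A combination of Hankel columns is a combination of such windows, so the
same combination of the windowed states is a state sequence for it.
-/

open Matrix

section Trajectory

variable {R σ ι κ : Type*} [CommSemiring R] [Fintype σ] [Fintype ι]
  (A : Matrix σ σ R) (B : Matrix σ ι R) (C : Matrix κ σ R) (D : Matrix κ ι R)

def IsTrajectory (L : ℕ) (u : ℕ → ι → R) (x : ℕ → σ → R) (y : ℕ → κ → R) : Prop :=
  (∀ t, t + 1 < L → x (t + 1) = A *ᵥ x t + B *ᵥ u t) ∧ ∀ t, t < L → y t = C *ᵥ x t + D *ᵥ u t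

variable {A B C D}

namespace IsTrajectory

theorem congr {L : ℕ} {u u' : ℕ → ι → R} {x : ℕ → σ → R} {y y' : ℕ → κ → R}
    (h : IsTrajectory A B C D L u x y) (hu : ∀ t, t < L → u' t = u t)
    (hy : ∀ t, t < L → y' t = y t) : IsTrajectory A B C D L u' x y' :=
  ⟨fun t ht => by rw [hu t (by omega), h.1 t ht],
    fun t ht => by rw [hu t ht, hy t ht, h.2 t ht]⟩

theorem shift {T L s : ℕ} {u : ℕ → ι → R} {x : ℕ → σ → R} {y : ℕ → κ → R}
    (h : IsTrajectory A B C D T u x y) (hsL : s + L ≤ T) :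
    IsTrajectory A B C D L (fun t => u (t + s)) (fun t => x (t + s)) (fun t => y (t + s)) :=
  ⟨fun t ht => by
    simp only [Nat.add_right_comm t 1 s]
    exact h.1 (t + s) (by omega),
    fun t ht => h.2 (t + s) (by omega)⟩

theorem sum_smul {J : Type*} {L : ℕ} (S : Finset J) (g : J → R) {u : J → ℕ → ι → R}
    {x : J → ℕ → σ → R} {y : J → ℕ → κ → R}
    (h : ∀ j ∈ S, IsTrajectory A B C D L (u j) (x j) (y j)) :
    IsTrajectory A B C D L (fun t => ∑ j ∈ S, g j • u j t) (fun t => ∑ j ∈ S, g j • x j t)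
      (fun t => ∑ j ∈ S, g j • y j t) := by
  constructor
  · intro t ht
    simp only [mulVec_sum, mulVec_smul, ← Finset.sum_add_distrib, ← smul_add]
    exact Finset.sum_congr rfl fun j hj => by rw [(h j hj).1 t ht]
  · intro t ht
    simp only [mulVec_sum, mulVec_smul, ← Finset.sum_add_distrib, ← smul_add]
    exact Finset.sum_congr rfl fun j hj => by rw [(h j hj).2 t ht]

end IsTrajectory

end Trajectory

theorem hankel_comb_is_trajectory_general (n m p L T : ℕ) (hLT : L ≤ T)
    (A : Matrix (Fin n) (Fin n) ℝ) (B : Matrix (Fin n) (Fin m) ℝ)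
    (C : Matrix (Fin p) (Fin n) ℝ) (D : Matrix (Fin p) (Fin m) ℝ)
    (u : ℕ → Fin m → ℝ) (x : ℕ → Fin n → ℝ) (y : ℕ → Fin p → ℝ)
    (hx : ∀ t, t + 1 < T → x (t + 1) = A.mulVec (x t) + B.mulVec (u t))
    (hy : ∀ t, t < T → y t = C.mulVec (x t) + D.mulVec (u t))
    (g : Fin (T - L + 1) → ℝ)
    (ubar : ℕ → Fin m → ℝ) (ybar : ℕ → Fin p → ℝ)
    (hubar : ∀ t, t < L → ∀ r, ubar t r = ∑ j : Fin (T - L + 1), g j * u (t + (j : ℕ)) r)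
    (hybar : ∀ t, t < L → ∀ r, ybar t r = ∑ j : Fin (T - L + 1), g j * y (t + (j : ℕ)) r) :
    ∃ xbar : ℕ → Fin n → ℝ,
      (∀ t, t + 1 < L → xbar (t + 1) = A.mulVec (xbar t) + B.mulVec (ubar t)) ∧
      (∀ t, t < L → ybar t = C.mulVec (xbar t) + D.mulVec (ubar t)) := by
  have windows : ∀ j : Fin (T - L + 1), IsTrajectory A B C D L
      (fun t => u (t + j)) (fun t => x (t + j)) (fun t => y (t + j)) :=
    fun j => IsTrajectory.shift (T := T) ⟨hx, hy⟩ (by have := j.isLt; omega)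
  have hbar : IsTrajectory A B C D L ubar (fun t => ∑ j, g j • x (t + j)) ybar :=
    (IsTrajectory.sum_smul Finset.univ g fun j _ => windows j).congr
      (fun t ht => by ext r; simp [hubar t ht r]) (fun t ht => by ext r; simp [hybar t ht r])
  exact ⟨_, hbar.1, hbar.2⟩

/-- Any linear combination (with coefficient vector `g`) of the columns of the stacked
Hankel matrix `[H_L(u); H_L(y)]` built from a length-`T` input/output trajectory of the
system `x(t+1) = Ax(t) + Bu(t), y(t) = Cx(t) + Du(t)` is again a length-`L`
input/output trajectory of the system. -/
theorem hankel_comb_is_trajectory (n m p L T : ℕ) (hL : 1 ≤ L) (hLT : L ≤ T)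
    (A : Matrix (Fin n) (Fin n) ℝ) (B : Matrix (Fin n) (Fin m) ℝ)
    (C : Matrix (Fin p) (Fin n) ℝ) (D : Matrix (Fin p) (Fin m) ℝ)
    (u : ℕ → Fin m → ℝ) (x : ℕ → Fin n → ℝ) (y : ℕ → Fin p → ℝ)
    (hx : ∀ t, t + 1 < T → x (t + 1) = A.mulVec (x t) + B.mulVec (u t))
    (hy : ∀ t, t < T → y t = C.mulVec (x t) + D.mulVec (u t))
    (g : Fin (T - L + 1) → ℝ)
    (ubar : ℕ → Fin m → ℝ) (ybar : ℕ → Fin p → ℝ)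
    (hubar : ∀ t, t < L → ∀ r, ubar t r = ∑ j : Fin (T - L + 1), g j * u (t + (j : ℕ)) r)
    (hybar : ∀ t, t < L → ∀ r, ybar t r = ∑ j : Fin (T - L + 1), g j * y (t + (j : ℕ)) r) :
    ∃ xbar : ℕ → Fin n → ℝ,
      (∀ t, t + 1 < L → xbar (t + 1) = A.mulVec (xbar t) + B.mulVec (ubar t)) ∧
      (∀ t, t < L → ybar t = C.mulVec (xbar t) + D.mulVec (ubar t)) :=
  hankel_comb_is_trajectory_general n m p L T hLT A B C D u x y hx hy g ubar ybar hubar hybar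
end

section
/- Let (u, x) be an input/state trajectory of x(t+1) = Ax(t) + Bu(t) on {0,...,T−1}, and suppose the row vector [ξ η] (with ξ ∈ ℝ^{1×n}, η ∈ ℝ^{1×mL}) lies in the left kernel of [H_1(x_{[0,T−L]}); H_L(u_{[0,T−1]})]. Then for every r with 0 ≤ r ≤ n, the row vector w_r = [ξ A^r, ξ A^{r−1}B, ..., ξ B, η, 0_{(n−r)m}] lies in the left kernel of the deeper matrix [H_1(x_{[0,T−n−L]}); H_{n+L}(u_{[0,T−1]})]. -/
/-!
Pairing `w_r` with column `c` of the deep matrix gives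
`ξ A^r x(c) + ∑_{k<r} ξ A^(r-1-k) B u(c+k) + ∑_{p<L} η_p u(c+r+p)`.
By the variation-of-constants formula the first two terms add up to `ξ x(c+r)`, so the pairing
equals `[ξ η]` applied to column `c+r` of the shallow matrix, which vanishes by hypothesis.
-/

/-- The stacked matrix `[H_1(x_{[0,T-L]}); H_L(u_{[0,T-1]})]`: the top block has
columns `x(0),...,x(T-L)` and the bottom block is the depth-`L` Hankel matrix of `u`. -/
def stackedXU (n m L T : ℕ) (x : ℕ → Fin n → ℝ) (u : ℕ → Fin m → ℝ) :
    Matrix (Fin n ⊕ Fin L × Fin m) (Fin (T - L + 1)) ℝ :=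
  fun r c =>
    Sum.elim (fun i => x (c : ℕ) i) (fun p => u ((p.1 : ℕ) + (c : ℕ)) p.2) r

/-- The row vector `w_r = [ξ A^r, ξ A^{r-1}B, ..., ξ B, η, 0_{(n-r)m}]`
of width `n + (n+L)m`. -/
def wvec (n m L : ℕ) (A : Matrix (Fin n) (Fin n) ℝ) (B : Matrix (Fin n) (Fin m) ℝ)
    (ξ : Fin n → ℝ) (η : Fin L × Fin m → ℝ) (r : ℕ) :
    Fin n ⊕ Fin (n + L) × Fin m → ℝ :=
  Sum.elim (fun i => Matrix.vecMul ξ (A ^ r) i)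
    (fun p =>
      if h1 : (p.1 : ℕ) < r then Matrix.vecMul ξ (A ^ (r - 1 - (p.1 : ℕ)) * B) p.2
      else if h2 : (p.1 : ℕ) < r + L then η (⟨(p.1 : ℕ) - r, by omega⟩, p.2) else 0)

open Matrix Finset

section Trajectory

variable {R ι κ : Type*} [Semiring R] [Fintype ι] [DecidableEq ι] [Fintype κ]
  {A : Matrix ι ι R} {B : Matrix ι κ R} {u : ℕ → κ → R} {x : ℕ → ι → R} {T : ℕ}

theorem trajectory_eq_pow_mulVec_add_sum
    (hx : ∀ t, t + 1 < T → x (t + 1) = A *ᵥ x t + B *ᵥ u t) {s t : ℕ} (hst : t + s < T) :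
    x (t + s) = (A ^ s) *ᵥ x t + ∑ k ∈ range s, (A ^ (s - 1 - k) * B) *ᵥ u (t + k) := by
  induction s with
  | zero => simp
  | succ s ih =>
    have hpow : ∀ k ∈ range s, A * A ^ (s - 1 - k) = A ^ (s - k) := fun k hk => by
      rw [← pow_succ']; congr 1; have := mem_range.mp hk; omega
    rw [← add_assoc, hx (t + s) (by omega), ih (by omega), mulVec_add, mulVec_mulVec, ← pow_succ',
      mulVec_sum, sum_range_succ, Nat.add_sub_cancel, Nat.sub_self, pow_zero, Matrix.one_mul,
      add_assoc]
    congr 2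
    refine sum_congr rfl fun k hk => ?_
    rw [mulVec_mulVec, ← Matrix.mul_assoc, hpow k hk]

theorem dotProduct_trajectory_eq
    (hx : ∀ t, t + 1 < T → x (t + 1) = A *ᵥ x t + B *ᵥ u t) {s t : ℕ} (hst : t + s < T)
    (ξ : ι → R) :
    ξ ⬝ᵥ x (t + s) = (ξ ᵥ* A ^ s) ⬝ᵥ x t
      + ∑ k ∈ range s, (ξ ᵥ* (A ^ (s - 1 - k) * B)) ⬝ᵥ u (t + k) := by
  simp only [trajectory_eq_pow_mulVec_add_sum hx hst, dotProduct_add, dotProduct_sum,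
    dotProduct_mulVec]

end Trajectory

theorem vecMul_stackedXU_apply {n m L T : ℕ} (x : ℕ → Fin n → ℝ) (u : ℕ → Fin m → ℝ)
    (v : Fin n ⊕ Fin L × Fin m → ℝ) (c : Fin (T - L + 1)) :
    (v ᵥ* stackedXU n m L T x u) c
      = (v ∘ Sum.inl) ⬝ᵥ x c + ∑ p : Fin L, (fun j => v (Sum.inr (p, j))) ⬝ᵥ u (c + p) := by
  simp [vecMul, dotProduct, stackedXU, Fintype.sum_sum_type, Fintype.sum_prod_type, add_comm]

theorem sum_wvec_inr_dotProduct {n m L r : ℕ} (hr : r ≤ n) (A : Matrix (Fin n) (Fin n) ℝ)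
    (B : Matrix (Fin n) (Fin m) ℝ) (ξ : Fin n → ℝ) (η : Fin L × Fin m → ℝ)
    (y : ℕ → Fin m → ℝ) :
    ∑ p : Fin (n + L), (fun j => wvec n m L A B ξ η r (Sum.inr (p, j))) ⬝ᵥ y p
      = ∑ k ∈ range r, (ξ ᵥ* (A ^ (r - 1 - k) * B)) ⬝ᵥ y k
        + ∑ p : Fin L, (fun j => η (p, j)) ⬝ᵥ y (r + p) := by
  rw [← Fintype.sum_equiv (finCongr (by omega : r + L + (n - r) = n + L)) _ _ fun _ => rfl,
    Fin.sum_univ_add, Fin.sum_univ_add, ← Fin.sum_univ_eq_sum_range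
      (fun k => (ξ ᵥ* (A ^ (r - 1 - k) * B)) ⬝ᵥ y k)]
  have hzero : ∀ i : Fin (n - r), ¬ (r + L + i : ℕ) < r := by omega
  simp [wvec, hzero]

/-- If `[ξ η]` lies in the left kernel of `[H_1(x_{[0,T-L]}); H_L(u_{[0,T-1]})]`, where
`(u,x)` is an input/state trajectory of `x(t+1) = Ax(t) + Bu(t)`, then for every
`0 ≤ r ≤ n` the row vector `w_r = [ξ A^r, ξ A^{r-1}B, ..., ξ B, η, 0_{(n-r)m}]`
lies in the left kernel of the deeper matrix `[H_1(x_{[0,T-n-L]}); H_{n+L}(u_{[0,T-1]})]`. -/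
theorem left_kernel_propagation (n m L T : ℕ) (hL : 1 ≤ L) (hT : n + L ≤ T)
    (A : Matrix (Fin n) (Fin n) ℝ) (B : Matrix (Fin n) (Fin m) ℝ)
    (u : ℕ → Fin m → ℝ) (x : ℕ → Fin n → ℝ)
    (hx : ∀ t, t + 1 < T → x (t + 1) = A.mulVec (x t) + B.mulVec (u t))
    (ξ : Fin n → ℝ) (η : Fin L × Fin m → ℝ)
    (hker : Matrix.vecMul (Sum.elim ξ η) (stackedXU n m L T x u) = 0) :
    ∀ r, r ≤ n →
      Matrix.vecMul (wvec n m L A B ξ η r) (stackedXU n m (n + L) T x u) = 0 := by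
  intro r hr
  ext c
  have hc : (c : ℕ) + r < T - L + 1 := by have := c.is_lt; omega
  have hshift := congrFun hker ⟨c + r, hc⟩
  have htraj := dotProduct_trajectory_eq hx (s := r) (t := c) (by omega) ξ
  rw [vecMul_stackedXU_apply] at hshift ⊢
  rw [sum_wvec_inr_dotProduct hr A B ξ η fun k => u (c + k)]
  simp only [wvec, Sum.elim_comp_inl, Sum.elim_inr, Pi.zero_apply, ← add_assoc] at hshift ⊢
  linear_combination hshift - htraj
end

section
/- Suppose w_0, ..., w_n ∈ ℝ^{1×(n+(n+L)m)} have the structure w_r = [ξ A^r, ξ A^{r−1}B, ..., ξ B, η, 0_{(n−r)m}] for a fixed ξ ∈ ℝ^{1×n}, η = [η_1, ..., η_L] ∈ ℝ^{1×mL}. If w_0, ..., w_n are linearly dependent over ℝ, then η = 0. -/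
/-!
Read the coefficients `g` of a dependence relation as a polynomial `G = ∑ g_r X^r` and, for each
`j`, the `j`-th column of `η` as a polynomial `P_j = ∑ η_{u,j} X^u`. In the tail columns
`k ≥ deg G` of `∑ g_r w_r` every `w_r` with `g_r ≠ 0` contributes `η` shifted by `r`, so these
entries are the coefficients of `G * P_j`. The leading coefficient of `G * P_j` sits in such a
column, so `P_j = 0`.
-/

open Polynomial

theorem Polynomial.eq_zero_of_forall_coeff_mul_natDegree_add_eq_zero {R : Type*} [Semiring R]
    [NoZeroDivisors R] {f p : R[X]} {L : ℕ} (hf : f ≠ 0) (hp : p.degree < L)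
    (h : ∀ u < L, (f * p).coeff (f.natDegree + u) = 0) : p = 0 := by
  by_contra hp0
  have hlead := h p.natDegree ((natDegree_lt_iff_degree_lt hp0).mpr hp)
  rw [coeff_mul_degree_add_degree] at hlead
  exact mul_ne_zero (leadingCoeff_ne_zero.mpr hf) (leadingCoeff_ne_zero.mpr hp0) hlead

section OfFn

variable {R : Type*} [Semiring R] [DecidableEq R] {N : ℕ}

theorem Polynomial.coeff_ofFn_mul (g : Fin N → R) (p : R[X]) (k : ℕ) :
    (ofFn N g * p).coeff k = ∑ r : Fin N, if (r : ℕ) ≤ k then g r * p.coeff (k - r) else 0 := by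
  simp only [ofFn_eq_sum_monomial, Finset.sum_mul, finsetSum_coeff, ← C_mul_X_pow_eq_monomial,
    mul_assoc, coeff_C_mul, coeff_X_pow_mul', mul_ite, mul_zero]

theorem Polynomial.apply_eq_zero_of_natDegree_ofFn_lt (g : Fin N → R) {r : Fin N}
    (hr : (ofFn N g).natDegree < r) : g r = 0 := by
  rw [← ofFn_coeff_eq_val_of_lt g r.isLt]
  exact coeff_eq_zero_of_natDegree_lt hr

end OfFn

section Wvec

variable {n m L : ℕ} {A : Matrix (Fin n) (Fin n) ℝ} {B : Matrix (Fin n) (Fin m) ℝ}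
  {ξ : Fin n → ℝ} {η : Fin L × Fin m → ℝ}

theorem wvec_inr_of_le {r : ℕ} (k : Fin (n + L)) (j : Fin m) (hrk : r ≤ k) :
    wvec n m L A B ξ η r (.inr (k, j)) = (ofFn L fun u => η (u, j)).coeff (k - r) := by
  simp only [wvec, Sum.elim_inr, dif_neg (not_lt.mpr hrk)]
  split_ifs
  · rw [ofFn_coeff_eq_val_of_lt _ (by omega)]
  · rw [ofFn_coeff_eq_zero_of_ge _ (by omega)]

theorem sum_mul_wvec_inr_eq_coeff_mul (g : Fin (n + 1) → ℝ) (k : Fin (n + L)) (j : Fin m)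
    (hk : (ofFn (n + 1) g).natDegree ≤ k) :
    ∑ r, g r * wvec n m L A B ξ η r (.inr (k, j)) =
      (ofFn (n + 1) g * ofFn L fun u => η (u, j)).coeff k := by
  rw [coeff_ofFn_mul]
  refine Finset.sum_congr rfl fun r _ => ?_
  split_ifs with hrk
  · rw [wvec_inr_of_le k j hrk]
  · rw [apply_eq_zero_of_natDegree_ofFn_lt g (by omega), zero_mul]

end Wvec

/-- If the `n+1` structured row vectors `w_0, ..., w_n` (with
`w_r = [ξ A^r, ξ A^{r-1}B, ..., ξ B, η, 0_{(n-r)m}]`) are linearly dependent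
over `ℝ`, then `η = 0`. -/
theorem dependent_wvecs_eta_zero (n m L : ℕ)
    (A : Matrix (Fin n) (Fin n) ℝ) (B : Matrix (Fin n) (Fin m) ℝ)
    (ξ : Fin n → ℝ) (η : Fin L × Fin m → ℝ)
    (hdep : ¬ LinearIndependent ℝ (fun r : Fin (n + 1) => wvec n m L A B ξ η (r : ℕ))) :
    η = 0 := by
  obtain ⟨g, hsum, i, hgi⟩ := Fintype.not_linearIndependent_iff.mp hdep
  set G := ofFn (n + 1) g with hGdef
  have hG : G ≠ 0 := fun h => hgi <| by
    rw [← ofFn_coeff_eq_val_of_lt g i.isLt, ← hGdef, h, coeff_zero]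
  have hGdeg : G.natDegree ≤ n := Nat.lt_succ_iff.mp (ofFn_natDegree_lt (by omega) g)
  ext ⟨u, j⟩
  suffices hP : (ofFn L fun u => η (u, j)) = 0 by
    simpa [hP] using (ofFn_coeff_eq_val_of_lt (fun u => η (u, j)) u.isLt).symm
  refine eq_zero_of_forall_coeff_mul_natDegree_add_eq_zero hG (ofFn_degree_lt _) fun v hv => ?_
  have hcol := congrFun hsum (.inr (⟨G.natDegree + v, by omega⟩, j))
  simp only [Finset.sum_apply, Pi.smul_apply, smul_eq_mul, Pi.zero_apply] at hcol
  rwa [sum_mul_wvec_inr_eq_coeff_mul g _ j le_self_add] at hcol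
end

section
/- (Willems' fundamental lemma, rank statement.) Consider x(t+1) = Ax(t) + Bu(t) with (A,B) controllable, and let (u, x) be an input/state trajectory on {0,...,T−1}. If u is persistently exciting of order n + L, then the (n + mL) × (T − L + 1) matrix [H_1(x_{[0,T−L]}); H_L(u_{[0,T−1]})] has full row rank n + mL. -/
/-- Depth-`k` Hankel matrix of a sequence `u : {0,...,T-1} → ℝ^m`. -/
def Hankel (m k T : ℕ) (u : ℕ → Fin m → ℝ) :
    Matrix (Fin k × Fin m) (Fin (T - k + 1)) ℝ :=
  fun p j => u ((p.1 : ℕ) + (j : ℕ)) p.2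

/-- Kalman controllability matrix `[B, AB, ..., A^{n-1}B]`. -/
def ctrbMat (n m : ℕ) (A : Matrix (Fin n) (Fin n) ℝ) (B : Matrix (Fin n) (Fin m) ℝ) :
    Matrix (Fin n) (Fin n × Fin m) ℝ :=
  fun i p => (A ^ (p.1 : ℕ) * B) i p.2

/-!
A left-kernel vector `(ξ, η)` of the stacked matrix, pushed `i` times through the dynamics,
gives left-kernel vectors `(ξAⁱ, c(· + n - i))` of `[H_1(x); H_{n+L}(u)]`, all cut from the
single sequence `c = (ξA^{n-1}B, …, ξAB, ξB, η)`. Combining them with the coefficients `αᵢ` of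
the characteristic polynomial of `A` kills the state part (Cayley–Hamilton), so persistency of
excitation forces `∑ᵢ αᵢ c(k + n - i) = 0` for all `k < n + L`. As `αₙ = 1`, the last nonzero
entry of `c` would survive in this sum, hence `c = 0`: `η = 0` and `ξAˢB = 0` for `s < n`, and
controllability gives `ξ = 0`.
-/

open Matrix Finset

theorem Matrix.rank_eq_card_iff_vecMul_eq_zero {ι κ R : Type*} [Fintype ι] [Fintype κ] [Field R]
    (M : Matrix ι κ R) : M.rank = Fintype.card ι ↔ ∀ v, v ᵥ* M = 0 → v = 0 := by
  rw [M.rank_eq_finrank_span_row, eq_comm, ← Set.finrank,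
    ← linearIndependent_iff_card_eq_finrank_span, ← vecMul_injective_iff, ← coe_vecMulLinear,
    ← LinearMap.ker_eq_bot, LinearMap.ker_eq_bot']
  rfl

theorem Matrix.sum_charpoly_coeff_smul_vecMul_pow {n : ℕ} {R : Type*} [CommRing R]
    (A : Matrix (Fin n) (Fin n) R) (ξ : Fin n → R) :
    ∑ i ∈ range (n + 1), A.charpoly.coeff i • (ξ ᵥ* A ^ i) = 0 := by
  have := congrArg (ξ ᵥ* ·) (aeval_self_charpoly A)
  nontriviality R
  simpa [Polynomial.aeval_eq_sum_range, vecMul_sum, vecMul_smul] using this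

theorem eq_zero_of_sum_smul_shift_eq_zero {R V : Type*} [Semiring R] [AddCommMonoid V]
    [Module R V] {n N : ℕ} {α : ℕ → R} (hα : α n = 1) {c : ℕ → V} (hc : ∀ k, N ≤ k → c k = 0)
    (h : ∀ k < N, ∑ i ∈ range (n + 1), α i • c (k + (n - i)) = 0) (k : ℕ) : c k = 0 := by
  suffices ∀ d k, N ≤ k + d → c k = 0 from this (N - k) k (by omega)
  intro d
  induction d with
  | zero => exact hc
  | succ d ih =>
    intro k hk
    rcases le_or_gt N k with hNk | hkN
    · exact hc k hNk
    have hlow : ∑ i ∈ range n, α i • c (k + (n - i)) = 0 :=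
      sum_eq_zero fun i hi => by rw [ih _ (by simp at hi; omega), smul_zero]
    simpa [sum_range_succ, hlow, hα] using h k hkN

section Annihilator

variable {n m : ℕ} (T : ℕ) (x : ℕ → Fin n → ℝ) (u : ℕ → Fin m → ℝ)

/-- `(ξ, c₀, …, c_{N-1})` lies in the left kernel of `[H_1(x_{[0,T-N]}); H_N(u_{[0,T-1]})]`. -/
def Annihilates (N : ℕ) (ξ : Fin n → ℝ) (c : ℕ → Fin m → ℝ) : Prop :=
  ∀ j, j + N ≤ T → ξ ⬝ᵥ x j + ∑ k ∈ range N, c k ⬝ᵥ u (j + k) = 0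

variable {T x u}

theorem Annihilates.shift {A : Matrix (Fin n) (Fin n) ℝ} {B : Matrix (Fin n) (Fin m) ℝ}
    (hx : ∀ t, t + 1 < T → x (t + 1) = A *ᵥ x t + B *ᵥ u t) {N : ℕ} (hN : 1 ≤ N)
    {ξ : Fin n → ℝ} {c : ℕ → Fin m → ℝ} (hc : c 0 = ξ ᵥ* B)
    (h : Annihilates T x u N ξ fun k => c (k + 1)) :
    Annihilates T x u (N + 1) (ξ ᵥ* A) c := by
  intro j hj
  have := h (j + 1) (by omega)
  rw [hx j (by omega), dotProduct_add, dotProduct_mulVec, dotProduct_mulVec] at this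
  rw [sum_range_succ', hc]
  simp only [← add_assoc, add_right_comm j 1, add_zero] at this ⊢
  linarith

theorem Annihilates.shift_pow {A : Matrix (Fin n) (Fin n) ℝ} {B : Matrix (Fin n) (Fin m) ℝ}
    (hx : ∀ t, t + 1 < T → x (t + 1) = A *ᵥ x t + B *ᵥ u t) {N r : ℕ} (hN : 1 ≤ N)
    {ξ : Fin n → ℝ} {c : ℕ → Fin m → ℝ} (hc : ∀ s < r, c s = ξ ᵥ* (A ^ (r - 1 - s) * B))
    (h : Annihilates T x u N ξ fun k => c (k + r)) :
    ∀ i ≤ r, Annihilates T x u (N + i) (ξ ᵥ* A ^ i) fun k => c (k + (r - i)) := by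
  intro i
  induction i with
  | zero => simpa using h
  | succ i ih =>
    intro hi
    rw [← add_assoc, pow_succ, ← vecMul_vecMul]
    refine Annihilates.shift hx (by omega) ?_ ?_
    · rw [hc _ (by omega), vecMul_vecMul]
      congr 3
      omega
    · convert ih (by omega) using 3 with k
      omega

theorem Annihilates.mono {N N' : ℕ} (hNN' : N ≤ N') {ξ : Fin n → ℝ} {c : ℕ → Fin m → ℝ}
    (hc : ∀ k, N ≤ k → c k = 0) (h : Annihilates T x u N ξ c) :
    Annihilates T x u N' ξ c := by
  intro j hj
  rw [← h j (by omega), sum_subset (range_subset_range.mpr hNN')]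
  intro k _ hk
  rw [hc k (by simpa using hk), zero_dotProduct]

theorem Annihilates.sum {ι : Type*} (s : Finset ι) (a : ι → ℝ) {N : ℕ} {ξ : ι → Fin n → ℝ}
    {c : ι → ℕ → Fin m → ℝ} (h : ∀ i ∈ s, Annihilates T x u N (ξ i) (c i)) :
    Annihilates T x u N (∑ i ∈ s, a i • ξ i) (∑ i ∈ s, a i • c i) := by
  intro j hj
  calc _ = ∑ i ∈ s, a i * (ξ i ⬝ᵥ x j + ∑ k ∈ range N, c i k ⬝ᵥ u (j + k)) := by
        simp only [sum_dotProduct, Finset.sum_apply, Pi.smul_apply, smul_dotProduct, smul_eq_mul,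
          mul_add, sum_add_distrib, mul_sum]
        rw [sum_comm]
    _ = 0 := sum_eq_zero fun i hi => by rw [h i hi j hj, mul_zero]

end Annihilator

theorem Hankel.eq_zero_of_rank_eq {m N T : ℕ} {u : ℕ → Fin m → ℝ} (hN : N ≤ T)
    (hpe : (Hankel m N T u).rank = N * m) {W : ℕ → Fin m → ℝ}
    (hW : ∀ j, j + N ≤ T → ∑ k ∈ range N, W k ⬝ᵥ u (j + k) = 0) : ∀ k < N, W k = 0 := by
  have hker := (rank_eq_card_iff_vecMul_eq_zero (Hankel m N T u)).mp (by simpa using hpe)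
  intro k hk
  ext e
  refine congrFun (hker (fun p => W p.1 p.2) (funext fun j => ?_)) (⟨k, hk⟩, e)
  have := hW j (by omega)
  rw [← Fin.sum_univ_eq_sum_range (fun k => W k ⬝ᵥ u (j + k))] at this
  simpa [vecMul, dotProduct, Hankel, Fintype.sum_prod_type, add_comm] using this

theorem ctrbMat.eq_zero_of_vecMul_pow_mul_eq_zero {n m : ℕ} {A : Matrix (Fin n) (Fin n) ℝ}
    {B : Matrix (Fin n) (Fin m) ℝ} (hctrb : (ctrbMat n m A B).rank = n) {ξ : Fin n → ℝ}
    (h : ∀ s < n, ξ ᵥ* (A ^ s * B) = 0) : ξ = 0 := by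
  have hker := (rank_eq_card_iff_vecMul_eq_zero (ctrbMat n m A B)).mp (by simpa using hctrb)
  refine hker ξ (funext fun p => ?_)
  simpa [vecMul, ctrbMat] using congrFun (h p.1 p.1.isLt) p.2

theorem annihilates_of_vecMul_stackedXU_eq_zero {n m L T : ℕ} {x : ℕ → Fin n → ℝ}
    {u : ℕ → Fin m → ℝ} (hLT : L ≤ T) {v : Fin n ⊕ Fin L × Fin m → ℝ}
    (hv : v ᵥ* stackedXU n m L T x u = 0) :
    Annihilates T x u L (fun i => v (Sum.inl i))
      (Function.extend Fin.val (fun k e => v (Sum.inr (k, e))) 0) := by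
  intro j hj
  have := congrFun hv ⟨j, by omega⟩
  rw [← Fin.sum_univ_eq_sum_range (fun k => _ ⬝ᵥ u (j + k))]
  simpa [vecMul, dotProduct, stackedXU, Fintype.sum_sum_type, Fintype.sum_prod_type,
    Fin.val_injective.extend_apply, add_comm] using this

theorem Annihilates.eq_zero {n m L T : ℕ} (hL : 1 ≤ L) (hT : n + L ≤ T)
    {A : Matrix (Fin n) (Fin n) ℝ} {B : Matrix (Fin n) (Fin m) ℝ}
    (hctrb : (ctrbMat n m A B).rank = n) {u : ℕ → Fin m → ℝ} {x : ℕ → Fin n → ℝ}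
    (hx : ∀ t, t + 1 < T → x (t + 1) = A *ᵥ x t + B *ᵥ u t)
    (hpe : (Hankel m (n + L) T u).rank = (n + L) * m) {ξ : Fin n → ℝ} {η : ℕ → Fin m → ℝ}
    (hη : ∀ k, L ≤ k → η k = 0) (h : Annihilates T x u L ξ η) : ξ = 0 ∧ η = 0 := by
  set c : ℕ → Fin m → ℝ := fun k => if k < n then ξ ᵥ* (A ^ (n - 1 - k) * B) else η (k - n)
  have hc_top : ∀ k, n + L ≤ k → c k = 0 := fun k hk => by
    simp [c, hη (k - n) (by omega), show ¬k < n by omega]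
  have hrel : ∀ i ∈ range (n + 1),
      Annihilates T x u (n + L) (ξ ᵥ* A ^ i) fun k => c (k + (n - i)) := by
    intro i hi
    rw [mem_range] at hi
    have hbase : Annihilates T x u L ξ fun k => c (k + n) := by simpa [c] using h
    have hc_low : ∀ s < n, c s = ξ ᵥ* (A ^ (n - 1 - s) * B) := fun s hs => if_pos hs
    have hshift := hbase.shift_pow hx hL hc_low i (by omega)
    exact hshift.mono (by omega) fun k hk => hc_top _ (by omega)
  have hW := Annihilates.sum (range (n + 1)) (fun i => A.charpoly.coeff i) hrel
  rw [sum_charpoly_coeff_smul_vecMul_pow] at hW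
  have hW0 := Hankel.eq_zero_of_rank_eq (by omega) hpe fun j hj => by simpa using hW j hj
  have hα : A.charpoly.coeff n = 1 := by simpa using A.charpoly_monic.coeff_natDegree
  have hc : ∀ k, c k = 0 := eq_zero_of_sum_smul_shift_eq_zero hα hc_top fun k hk => by
    simpa only [Finset.sum_apply, Pi.smul_apply] using hW0 k hk
  refine ⟨ctrbMat.eq_zero_of_vecMul_pow_mul_eq_zero hctrb fun s hs => ?_, funext fun k => ?_⟩
  · simpa [c, show n - 1 - (n - 1 - s) = s by omega, show n - 1 - s < n by omega] using
      hc (n - 1 - s)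
  · simpa [c] using hc (k + n)

/-- Willems' fundamental lemma, rank statement: if `(A,B)` is controllable, `(u,x)` is an
input/state trajectory on `{0,...,T-1}`, and `u` is persistently exciting of order `n+L`,
then `[H_1(x_{[0,T-L]}); H_L(u_{[0,T-1]})]` has full row rank `n + mL`. -/
theorem willems_fundamental_lemma_rank (n m L T : ℕ) (hL : 1 ≤ L) (hT : n + L ≤ T)
    (A : Matrix (Fin n) (Fin n) ℝ) (B : Matrix (Fin n) (Fin m) ℝ)
    (hctrb : (ctrbMat n m A B).rank = n)
    (u : ℕ → Fin m → ℝ) (x : ℕ → Fin n → ℝ)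
    (hx : ∀ t, t + 1 < T → x (t + 1) = A.mulVec (x t) + B.mulVec (u t))
    (hpe : (Hankel m (n + L) T u).rank = (n + L) * m) :
    (stackedXU n m L T x u).rank = n + L * m := by
  rw [show n + L * m = Fintype.card (Fin n ⊕ Fin L × Fin m) by simp,
    rank_eq_card_iff_vecMul_eq_zero]
  intro v hv
  have hη_top : ∀ k, L ≤ k → Function.extend Fin.val (fun l e => v (Sum.inr (l, e))) 0 k = 0 :=
    fun k hk => Function.extend_apply' _ _ _ fun ⟨l, hl⟩ => by have := l.isLt; omega
  obtain ⟨hξ, hη⟩ :=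
    (annihilates_of_vecMul_stackedXU_eq_zero (by omega) hv).eq_zero hL hT hctrb hx hpe hη_top
  ext (i | ⟨k, e⟩)
  · exact congrFun hξ i
  · simpa [Fin.val_injective.extend_apply] using congrFun (congrFun hη k) e
end

section
/- (Fundamental lemma for multiple trajectories, rank statement.) Consider x(t+1) = Ax(t) + Bu(t) with (A,B) controllable. Let (u^i, x^i) be input/state trajectories on {0,...,T_i−1} for i=1,...,q, and assume the inputs u^1,...,u^q are collectively persistently exciting of order n + L. Then the matrix [H_1(x^1_{[0,T_1−L]}) ... H_1(x^q_{[0,T_q−L]}); H_L(u^1_{[0,T_1−1]}) ... H_L(u^q_{[0,T_q−1]})] has full row rank n + mL. -/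
/-!
A row `(ξ, η)` in the left kernel of the stacked matrix says `ξ ⬝ x(t) + ∑ₗ ηₗ ⬝ u(t + l) = 0`
on every window. By the dynamics, the same relation at time `t + k` is a relation at time `t`
with state row `ξ Aᵏ` and, as input coefficients, the window starting at `n - k` of the row
`y = [ξ Aⁿ⁻¹ B, …, ξ B, η₀, …, η_{L-1}]`. Summing these for `k ≤ n` against the coefficients of
the characteristic polynomial of `A` kills the state part (Cayley–Hamilton) and leaves a relation
between `n + L` consecutive inputs, which collective persistency of excitation forces to be
trivial. As the characteristic polynomial is monic, this is a recurrence expressing each `y r`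
through later entries, so the zero tail of `y` propagates down to `y = 0`: hence `η = 0` and
`ξ Aʲ B = 0` for `j < n`, and `ξ = 0` by controllability.
-/

/-- Mosaic-Hankel matrix of `q` sequences, concatenated horizontally. -/
def mosaicHankel (m k q : ℕ) (T : Fin q → ℕ) (u : Fin q → ℕ → Fin m → ℝ) :
    Matrix (Fin k × Fin m) ((i : Fin q) × Fin (T i - k + 1)) ℝ :=
  fun p c => u c.1 ((p.1 : ℕ) + (c.2 : ℕ)) p.2

/-- Mosaic stacked matrix
`[H_1(x^1) ⋯ H_1(x^q); H_L(u^1) ⋯ H_L(u^q)]`. -/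
def mosaicStackedXU (n m L q : ℕ) (T : Fin q → ℕ)
    (x : Fin q → ℕ → Fin n → ℝ) (u : Fin q → ℕ → Fin m → ℝ) :
    Matrix (Fin n ⊕ Fin L × Fin m) ((i : Fin q) × Fin (T i - L + 1)) ℝ :=
  fun r c =>
    Sum.elim (fun i => x c.1 (c.2 : ℕ) i)
      (fun p => u c.1 ((p.1 : ℕ) + (c.2 : ℕ)) p.2) r

open Matrix Finset

theorem Matrix.rank_eq_card_height_iff {K m n : Type*} [Field K] [Fintype m] [Fintype n]
    {A : Matrix m n K} : A.rank = Fintype.card m ↔ ∀ v, v ᵥ* A = 0 → v = 0 := by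
  rw [rank_eq_finrank_span_row, ← Set.finrank, eq_comm,
    ← linearIndependent_iff_card_eq_finrank_span, ← vecMul_injective_iff, ← coe_vecMulLinear,
    injective_iff_map_eq_zero]
  rfl

theorem eq_zero_of_forall_sum_smul_eq_zero {R M : Type*} [Ring R] [AddCommGroup M] [Module R M]
    {a : ℕ → R} {n N : ℕ} (ha : a n = 1) {y : ℕ → M} (hy : ∀ i, N ≤ i → y i = 0)
    (h : ∀ r < N, ∑ k ∈ range (n + 1), a k • y (r + n - k) = 0) : y = 0 := by
  suffices ∀ j i, N ≤ i + j → y i = 0 from funext fun i => this N i (by omega)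
  intro j
  induction j with
  | zero => exact fun i hi => hy i hi
  | succ j ih =>
    intro i hi
    by_cases hiN : N ≤ i
    · exact hy i hiN
    have hlater : ∀ k ∈ range n, a k • y (i + n - k) = 0 := fun k hk => by
      rw [ih (i + n - k) (by simp at hk; omega), smul_zero]
    simpa [sum_range_succ, sum_eq_zero hlater, ha] using h i (by omega)

section Trajectory

variable {R ι κ : Type*} [CommRing R] [Fintype ι] [DecidableEq ι] [Fintype κ]
  {A : Matrix ι ι R} {B : Matrix ι κ R}

def windowPairing (ξ : ι → R) (η : ℕ → κ → R) (N : ℕ) (x : ℕ → ι → R) (u : ℕ → κ → R)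
    (t : ℕ) : R :=
  ξ ⬝ᵥ x t + ∑ l ∈ range N, η l ⬝ᵥ u (t + l)

variable (A B) in
def extendInputCoeffs (ξ : ι → R) (η : ℕ → κ → R) (K : ℕ) : ℕ → κ → R :=
  fun i => if i < K then ξ ᵥ* (A ^ (K - 1 - i) * B) else η (i - K)

theorem windowPairing_add {T : ℕ} {x : ℕ → ι → R} {u : ℕ → κ → R}
    (hx : ∀ t, t + 1 < T → x (t + 1) = A *ᵥ x t + B *ᵥ u t)
    {ξ : ι → R} {η : ℕ → κ → R} {L : ℕ} (hη : ∀ l, L ≤ l → η l = 0) {k K : ℕ} (hk : k ≤ K) :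
    ∀ {t}, t + k < T → windowPairing ξ η L x u (t + k) =
      windowPairing (ξ ᵥ* A ^ k) (fun r => extendInputCoeffs A B ξ η K (r + K - k)) (K + L)
        x u t := by
  induction k with
  | zero =>
    intro t _
    have htail : ∀ r ∈ range (K + L), r ∉ range L → η r ⬝ᵥ u (t + r) = 0 := fun r _ hr => by
      rw [hη r (by simpa using hr), zero_dotProduct]
    simp only [windowPairing, extendInputCoeffs, pow_zero, vecMul_one, add_zero, Nat.sub_zero,
      add_lt_iff_neg_right, not_lt_zero, if_false, Nat.add_sub_cancel]
    rw [sum_subset (range_subset_range.2 (by omega)) htail]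
  | succ k ih =>
    intro t ht
    obtain ⟨M, hM⟩ : ∃ M, K + L = M + 1 := ⟨K + L - 1, by omega⟩
    have hlast : extendInputCoeffs A B ξ η K (M + K - k) = 0 := by
      simp only [extendInputCoeffs, if_neg (show ¬ M + K - k < K by omega)]
      exact hη _ (by omega)
    have hfirst : extendInputCoeffs A B ξ η K (K - (k + 1)) = ξ ᵥ* (A ^ k * B) := by
      simp only [extendInputCoeffs, if_pos (show K - (k + 1) < K by omega)]
      congr 3; omega
    have hshift : ∀ r ∈ range M, extendInputCoeffs A B ξ η K (r + K - k) ⬝ᵥ u (t + 1 + r) =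
        extendInputCoeffs A B ξ η K (r + 1 + K - (k + 1)) ⬝ᵥ u (t + (r + 1)) := fun r _ => by
      rw [show r + 1 + K - (k + 1) = r + K - k by omega, add_assoc, add_comm 1 r]
    rw [show t + (k + 1) = (t + 1) + k by omega, ih (by omega) (by omega), windowPairing,
      windowPairing, hx t (by omega), hM, sum_range_succ, sum_range_succ', hlast, zero_dotProduct,
      add_zero, dotProduct_add, dotProduct_mulVec, dotProduct_mulVec, vecMul_vecMul,
      vecMul_vecMul, ← pow_succ, zero_add, add_zero, hfirst, sum_congr rfl hshift]
    abel

theorem sum_charpoly_coeff_mul_windowPairing [Nontrivial R] {T : ℕ} {x : ℕ → ι → R}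
    {u : ℕ → κ → R}
    (hx : ∀ t, t + 1 < T → x (t + 1) = A *ᵥ x t + B *ᵥ u t)
    {ξ : ι → R} {η : ℕ → κ → R} {L : ℕ} (hη : ∀ l, L ≤ l → η l = 0) {t : ℕ}
    (ht : t + Fintype.card ι < T) :
    ∑ k ∈ range (Fintype.card ι + 1), A.charpoly.coeff k * windowPairing ξ η L x u (t + k) =
      ∑ r ∈ range (Fintype.card ι + L), (∑ k ∈ range (Fintype.card ι + 1),
        A.charpoly.coeff k • extendInputCoeffs A B ξ η (Fintype.card ι) (r + Fintype.card ι - k))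
          ⬝ᵥ u (t + r) := by
  have hcayley : ∑ k ∈ range (Fintype.card ι + 1), A.charpoly.coeff k • A ^ k = 0 := by
    simpa [Polynomial.aeval_eq_sum_range] using A.aeval_self_charpoly
  have hstate :
      ∑ k ∈ range (Fintype.card ι + 1), A.charpoly.coeff k * ((ξ ᵥ* A ^ k) ⬝ᵥ x t) = 0 := by
    simp_rw [← smul_eq_mul, ← smul_dotProduct, ← vecMul_smul, ← sum_dotProduct, ← vecMul_sum,
      hcayley, vecMul_zero, zero_dotProduct]
  rw [sum_congr rfl fun k hk => congrArg _
    (windowPairing_add hx hη (Nat.lt_succ_iff.1 (mem_range.1 hk)) (by simp at hk; omega))]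
  simp_rw [windowPairing, mul_add, sum_add_distrib, hstate, zero_add, mul_sum]
  rw [sum_comm]
  simp_rw [sum_dotProduct, smul_dotProduct, smul_eq_mul]

theorem extendInputCoeffs_eq_zero [Nontrivial R] {Q : Type*} {T : Q → ℕ}
    {x : Q → ℕ → ι → R} {u : Q → ℕ → κ → R}
    (hx : ∀ i t, t + 1 < T i → x i (t + 1) = A *ᵥ x i t + B *ᵥ u i t)
    {L : ℕ} (hL : 1 ≤ L)
    (hpe : ∀ w : ℕ → κ → R, (∀ i t, t + (Fintype.card ι + L) ≤ T i →
      ∑ r ∈ range (Fintype.card ι + L), w r ⬝ᵥ u i (t + r) = 0) →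
        ∀ r < Fintype.card ι + L, w r = 0)
    {ξ : ι → R} {η : ℕ → κ → R} (hη : ∀ l, L ≤ l → η l = 0)
    (hker : ∀ i t, t + L ≤ T i → windowPairing ξ η L (x i) (u i) t = 0) :
    extendInputCoeffs A B ξ η (Fintype.card ι) = 0 := by
  refine eq_zero_of_forall_sum_smul_eq_zero (a := A.charpoly.coeff) (n := Fintype.card ι)
    (N := Fintype.card ι + L) ?_ (fun r hr => ?_) (hpe _ fun i t ht => ?_)
  · simpa using A.charpoly_monic.coeff_natDegree
  · simp only [extendInputCoeffs, if_neg (show ¬ r < Fintype.card ι by omega)]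
    exact hη _ (by omega)
  · rw [← sum_charpoly_coeff_mul_windowPairing (hx i) hη (by omega)]
    exact sum_eq_zero fun k hk => by rw [hker i (t + k) (by simp at hk; omega), mul_zero]

end Trajectory

theorem eq_zero_of_rank_mosaicHankel_eq {m N q : ℕ} {T : Fin q → ℕ} (hT : ∀ i, N ≤ T i)
    {u : Fin q → ℕ → Fin m → ℝ} (hpe : (mosaicHankel m N q T u).rank = N * m)
    (w : ℕ → Fin m → ℝ)
    (hw : ∀ i t, t + N ≤ T i → ∑ r ∈ range N, w r ⬝ᵥ u i (t + r) = 0) :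
    ∀ r < N, w r = 0 := by
  have hw' : (fun rp : Fin N × Fin m => w rp.1 rp.2) = 0 := by
    refine rank_eq_card_height_iff.1 (by simpa using hpe) _ (funext fun c => ?_)
    obtain ⟨i, t⟩ := c
    have ht : (t : ℕ) + N ≤ T i := by have := hT i; omega
    rw [Pi.zero_apply, ← hw i t ht, ← Fin.sum_univ_eq_sum_range]
    simp [vecMul, dotProduct, mosaicHankel, Fintype.sum_prod_type, add_comm]
  intro r hr
  ext p
  exact congrFun hw' (⟨r, hr⟩, p)

theorem eq_zero_of_rank_ctrbMat_eq {n m : ℕ} {A : Matrix (Fin n) (Fin n) ℝ}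
    {B : Matrix (Fin n) (Fin m) ℝ} (hctrb : (ctrbMat n m A B).rank = n) {ξ : Fin n → ℝ}
    (h : ∀ j < n, ξ ᵥ* (A ^ j * B) = 0) : ξ = 0 :=
  rank_eq_card_height_iff.1 (by simpa using hctrb) ξ <| by
    ext ⟨j, p⟩
    simpa [vecMul, ctrbMat, dotProduct] using congrFun (h j j.isLt) p

def inputCoeffs {n m L : ℕ} (v : Fin n ⊕ Fin L × Fin m → ℝ) : ℕ → Fin m → ℝ :=
  fun l p => if h : l < L then v (Sum.inr (⟨l, h⟩, p)) else 0

theorem windowPairing_eq_zero_of_vecMul_mosaicStackedXU_eq_zero {n m L q : ℕ} {T : Fin q → ℕ}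
    {x : Fin q → ℕ → Fin n → ℝ} {u : Fin q → ℕ → Fin m → ℝ} {v : Fin n ⊕ Fin L × Fin m → ℝ}
    (hv : v ᵥ* mosaicStackedXU n m L q T x u = 0) {i : Fin q} {t : ℕ} (ht : t + L ≤ T i) :
    windowPairing (fun j => v (Sum.inl j)) (inputCoeffs v) L (x i) (u i) t = 0 := by
  have := congrFun hv ⟨i, ⟨t, by omega⟩⟩
  rw [windowPairing, ← Fin.sum_univ_eq_sum_range (fun l => inputCoeffs v l ⬝ᵥ u i (t + l))]
  simpa [vecMul, dotProduct, mosaicStackedXU, inputCoeffs, Fintype.sum_sum_type,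
    Fintype.sum_prod_type, add_comm] using this

/-- Fundamental lemma for multiple trajectories, rank statement: if `(A,B)` is
controllable, `(u^i,x^i)` are input/state trajectories, and the inputs are collectively
persistently exciting of order `n+L`, then the mosaic matrix
`[H_1(x^1) ⋯ H_1(x^q); H_L(u^1) ⋯ H_L(u^q)]` has full row rank `n + mL`. -/
theorem multiple_trajectories_rank (n m L q : ℕ) (hL : 1 ≤ L)
    (T : Fin q → ℕ) (hT : ∀ i, n + L ≤ T i)
    (A : Matrix (Fin n) (Fin n) ℝ) (B : Matrix (Fin n) (Fin m) ℝ)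
    (hctrb : (ctrbMat n m A B).rank = n)
    (u : Fin q → ℕ → Fin m → ℝ) (x : Fin q → ℕ → Fin n → ℝ)
    (hx : ∀ i, ∀ t, t + 1 < T i →
      x i (t + 1) = A.mulVec (x i t) + B.mulVec (u i t))
    (hpe : (mosaicHankel m (n + L) q T u).rank = (n + L) * m) :
    (mosaicStackedXU n m L q T x u).rank = n + L * m := by
  rw [show n + L * m = Fintype.card (Fin n ⊕ Fin L × Fin m) by simp, rank_eq_card_height_iff]
  intro v hv
  have hy : extendInputCoeffs A B (fun j => v (Sum.inl j)) (inputCoeffs v) n = 0 := by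
    simpa using extendInputCoeffs_eq_zero (η := inputCoeffs v) hx hL
      (by simpa using eq_zero_of_rank_mosaicHankel_eq hT hpe)
      (fun l hl => funext fun p => by simp [inputCoeffs, not_lt.2 hl])
      (fun i t ht => windowPairing_eq_zero_of_vecMul_mosaicStackedXU_eq_zero hv ht)
  have hξ : (fun j => v (Sum.inl j)) = 0 := by
    refine eq_zero_of_rank_ctrbMat_eq hctrb fun j hj => ?_
    simpa [extendInputCoeffs, show n - 1 - (n - 1 - j) = j by omega, show n - 1 - j < n by omega]
      using congrFun hy (n - 1 - j)
  ext (j | ⟨l, p⟩)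
  · exact congrFun hξ j
  · simpa [extendInputCoeffs, inputCoeffs] using congrFun (congrFun hy (n + l)) p
end

section
/- (Willems' fundamental lemma, parameterization, 'if' direction given the rank condition.) Consider the system x(t+1)=Ax(t)+Bu(t), y(t)=Cx(t)+Du(t) and a trajectory (u, x, y) on {0,...,T−1}. If the matrix [H_1(x_{[0,T−L]}); H_L(u_{[0,T−1]})] has full row rank, then for every length-L input/output trajectory (ū, ȳ) of the system there exists a vector g ∈ ℝ^{T−L+1} such that [ū; ȳ] = [H_L(u); H_L(y)] g. -/
/-!
Pick `g` with `[H_1(x); H_L(u)] g = [x̄(0); ū]`, possible since that matrix has full row rank.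
The window `t ↦ ∑ⱼ gⱼ x(t + j)` is then a state trajectory of the system for the input `ū`
with initial state `x̄(0)`, so by uniqueness of solutions it is `x̄`; applying `C`, `D` gives `ȳ`.
-/

open Matrix

theorem Matrix.mulVec_surjective_of_rank_eq_card {K m n : Type*} [Field K] [Fintype m]
    [Fintype n] {M : Matrix m n K} (hM : M.rank = Fintype.card m) :
    Function.Surjective M.mulVec := by
  have hrange : LinearMap.range M.mulVecLin = ⊤ := by
    apply Submodule.eq_top_of_finrank_eq
    rw [← Matrix.rank, hM, Module.finrank_fintype_fun_eq_card]
  exact LinearMap.range_eq_top.mp hrange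

def IsStateTrajectory {n m : ℕ} (A : Matrix (Fin n) (Fin n) ℝ) (B : Matrix (Fin n) (Fin m) ℝ)
    (L : ℕ) (x : ℕ → Fin n → ℝ) (u : ℕ → Fin m → ℝ) : Prop :=
  ∀ t, t + 1 < L → x (t + 1) = A *ᵥ x t + B *ᵥ u t

namespace IsStateTrajectory

variable {n m L : ℕ} {A : Matrix (Fin n) (Fin n) ℝ} {B : Matrix (Fin n) (Fin m) ℝ}

theorem shift {T j : ℕ} {x : ℕ → Fin n → ℝ} {u : ℕ → Fin m → ℝ}
    (h : IsStateTrajectory A B T x u) (hj : L + j ≤ T) :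
    IsStateTrajectory A B L (fun t => x (t + j)) (fun t => u (t + j)) := by
  intro t ht
  simpa only [Nat.add_right_comm t 1 j] using h (t + j) (by omega)

theorem sum_smul {ι : Type*} (s : Finset ι) (g : ι → ℝ) {x : ι → ℕ → Fin n → ℝ}
    {u : ι → ℕ → Fin m → ℝ} (h : ∀ j ∈ s, IsStateTrajectory A B L (x j) (u j)) :
    IsStateTrajectory A B L (fun t => ∑ j ∈ s, g j • x j t) (fun t => ∑ j ∈ s, g j • u j t) := by
  intro t ht
  simp only [mulVec_sum, mulVec_smul, ← Finset.sum_add_distrib, ← smul_add]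
  exact Finset.sum_congr rfl fun j hj => by rw [h j hj t ht]

theorem unique {x x' : ℕ → Fin n → ℝ} {u u' : ℕ → Fin m → ℝ}
    (h : IsStateTrajectory A B L x u) (h' : IsStateTrajectory A B L x' u')
    (h0 : x 0 = x' 0) (hu : ∀ t < L, u t = u' t) : ∀ t < L, x t = x' t := by
  intro t
  induction t with
  | zero => exact fun _ => h0
  | succ t ih =>
    intro ht
    rw [h t ht, h' t ht, ih (by omega), hu t (by omega)]

end IsStateTrajectory

theorem eq_sum_of_stackedXU_mulVec_eq {n m L T : ℕ} {x : ℕ → Fin n → ℝ} {u : ℕ → Fin m → ℝ}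
    {g : Fin (T - L + 1) → ℝ} {x₀ : Fin n → ℝ} {v : ℕ → Fin m → ℝ}
    (hg : stackedXU n m L T x u *ᵥ g = Sum.elim x₀ fun q => v q.1 q.2) :
    x₀ = ∑ j, g j • x j ∧ ∀ t < L, v t = ∑ j, g j • u (t + j) := by
  refine ⟨funext fun i => ?_, fun t ht => funext fun r => ?_⟩
  · simpa [mulVec, dotProduct, stackedXU, mul_comm] using (congrFun hg (Sum.inl i)).symm
  · simpa [mulVec, dotProduct, stackedXU, mul_comm, add_comm] using
      (congrFun hg (Sum.inr (⟨t, ht⟩, r))).symm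

theorem willems_parameterization_general (n m p L T : ℕ) (hLT : L ≤ T)
    (A : Matrix (Fin n) (Fin n) ℝ) (B : Matrix (Fin n) (Fin m) ℝ)
    (C : Matrix (Fin p) (Fin n) ℝ) (D : Matrix (Fin p) (Fin m) ℝ)
    (u : ℕ → Fin m → ℝ) (x : ℕ → Fin n → ℝ) (y : ℕ → Fin p → ℝ)
    (hx : ∀ t, t + 1 < T → x (t + 1) = A.mulVec (x t) + B.mulVec (u t))
    (hy : ∀ t, t < T → y t = C.mulVec (x t) + D.mulVec (u t))
    (hrank : (stackedXU n m L T x u).rank = n + L * m)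
    (ubar : ℕ → Fin m → ℝ) (ybar : ℕ → Fin p → ℝ)
    (htraj : ∃ xbar : ℕ → Fin n → ℝ,
      (∀ t, t + 1 < L → xbar (t + 1) = A.mulVec (xbar t) + B.mulVec (ubar t)) ∧
      (∀ t, t < L → ybar t = C.mulVec (xbar t) + D.mulVec (ubar t))) :
    ∃ g : Fin (T - L + 1) → ℝ,
      (∀ t, t < L → ∀ r, ubar t r = ∑ j : Fin (T - L + 1), g j * u (t + (j : ℕ)) r) ∧
      (∀ t, t < L → ∀ r, ybar t r = ∑ j : Fin (T - L + 1), g j * y (t + (j : ℕ)) r) := by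
  obtain ⟨xbar, hxbar, hybar⟩ := htraj
  have hfull : (stackedXU n m L T x u).rank = Fintype.card (Fin n ⊕ Fin L × Fin m) := by
    simpa using hrank
  obtain ⟨g, hg⟩ := mulVec_surjective_of_rank_eq_card hfull
    (Sum.elim (xbar 0) fun q : Fin L × Fin m => ubar q.1 q.2)
  obtain ⟨hx₀, hubar⟩ := eq_sum_of_stackedXU_mulVec_eq hg
  have hwindow : IsStateTrajectory A B L (fun t => ∑ j, g j • x (t + j))
      (fun t => ∑ j, g j • u (t + j)) :=
    IsStateTrajectory.sum_smul _ g fun j _ => IsStateTrajectory.shift hx (by omega)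
  have hxbar_eq : ∀ t < L, xbar t = ∑ j, g j • x (t + j) :=
    IsStateTrajectory.unique hxbar hwindow (by simpa using hx₀) hubar
  have hybar_eq : ∀ t < L, ybar t = ∑ j, g j • y (t + j) := by
    intro t ht
    have hy_window : ∀ j : Fin (T - L + 1), y (t + j) = C *ᵥ x (t + j) + D *ᵥ u (t + j) :=
      fun j => hy _ (by omega)
    simp only [hybar t ht, hxbar_eq t ht, hubar t ht, hy_window, mulVec_sum, mulVec_smul,
      smul_add, Finset.sum_add_distrib]
  refine ⟨g, fun t ht r => ?_, fun t ht r => ?_⟩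
  · simp [hubar t ht, Finset.sum_apply]
  · simp [hybar_eq t ht, Finset.sum_apply]

/-- Willems' fundamental lemma, parameterization ('if' direction given the rank
condition): if `[H_1(x_{[0,T-L]}); H_L(u_{[0,T-1]})]` has full row rank, then every
length-`L` input/output trajectory `(ū, ȳ)` of the system is a linear combination,
with some coefficient vector `g`, of the columns of `[H_L(u); H_L(y)]`. -/
theorem willems_parameterization (n m p L T : ℕ) (hL : 1 ≤ L) (hLT : L ≤ T)
    (A : Matrix (Fin n) (Fin n) ℝ) (B : Matrix (Fin n) (Fin m) ℝ)
    (C : Matrix (Fin p) (Fin n) ℝ) (D : Matrix (Fin p) (Fin m) ℝ)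
    (u : ℕ → Fin m → ℝ) (x : ℕ → Fin n → ℝ) (y : ℕ → Fin p → ℝ)
    (hx : ∀ t, t + 1 < T → x (t + 1) = A.mulVec (x t) + B.mulVec (u t))
    (hy : ∀ t, t < T → y t = C.mulVec (x t) + D.mulVec (u t))
    (hrank : (stackedXU n m L T x u).rank = n + L * m)
    (ubar : ℕ → Fin m → ℝ) (ybar : ℕ → Fin p → ℝ)
    (htraj : ∃ xbar : ℕ → Fin n → ℝ,
      (∀ t, t + 1 < L → xbar (t + 1) = A.mulVec (xbar t) + B.mulVec (ubar t)) ∧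
      (∀ t, t < L → ybar t = C.mulVec (xbar t) + D.mulVec (ubar t))) :
    ∃ g : Fin (T - L + 1) → ℝ,
      (∀ t, t < L → ∀ r, ubar t r = ∑ j : Fin (T - L + 1), g j * u (t + (j : ℕ)) r) ∧
      (∀ t, t < L → ∀ r, ybar t r = ∑ j : Fin (T - L + 1), g j * y (t + (j : ℕ)) r) :=
  willems_parameterization_general n m p L T hLT A B C D u x y hx hy hrank ubar ybar htraj
end

section
/- For the LTI system (A,B,C,D), and any input/state/output trajectory (u, x, y) on {0,...,T−1}, the matrix identity [[0, I]; [O_L, T_L]] · [H_1(x_{[0,T−L]}); H_L(u_{[0,T−1]})] = [H_L(u_{[0,T−1]}); H_L(y_{[0,T−1]})] holds, where O_L is the observability matrix and T_L the block Toeplitz matrix of Markov parameters. -/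
/-- The block matrix `[[0, I]; [O_L, T_L]]` (observability matrix and block Toeplitz
matrix of Markov parameters). -/
def bigM (n m p L : ℕ)
    (A : Matrix (Fin n) (Fin n) ℝ) (B : Matrix (Fin n) (Fin m) ℝ)
    (C : Matrix (Fin p) (Fin n) ℝ) (D : Matrix (Fin p) (Fin m) ℝ) :
    Matrix ((Fin L × Fin m) ⊕ (Fin L × Fin p)) (Fin n ⊕ Fin L × Fin m) ℝ :=
  fun r c =>
    match r, c with
    | Sum.inl _, Sum.inl _ => 0
    | Sum.inl pr, Sum.inr qr => if pr = qr then 1 else 0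
    | Sum.inr pr, Sum.inl i => (C * A ^ (pr.1 : ℕ)) pr.2 i
    | Sum.inr pr, Sum.inr qr =>
        if (qr.1 : ℕ) = (pr.1 : ℕ) then D pr.2 qr.2
        else if (qr.1 : ℕ) < (pr.1 : ℕ) then
          (C * A ^ ((pr.1 : ℕ) - (qr.1 : ℕ) - 1) * B) pr.2 qr.2
        else 0

/-- The stacked input/output Hankel matrix `[H_L(u_{[0,T-1]}); H_L(y_{[0,T-1]})]`. -/
def stackedUY (m p L T : ℕ) (u : ℕ → Fin m → ℝ) (y : ℕ → Fin p → ℝ) :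
    Matrix ((Fin L × Fin m) ⊕ (Fin L × Fin p)) (Fin (T - L + 1)) ℝ :=
  fun r c =>
    Sum.elim (fun pr => u ((pr.1 : ℕ) + (c : ℕ)) pr.2)
      (fun pr => y ((pr.1 : ℕ) + (c : ℕ)) pr.2) r

/-!
Iterating the state equation gives `x (k + c) = A ^ k x c + ∑ j < k, A ^ (k - j - 1) B u (j + c)`,
hence `y (k + c) = C A ^ k x c + ∑ j < k, C A ^ (k - j - 1) B u (j + c) + D u (k + c)`. This is
exactly row block `k` of `[O_L, T_L]` applied to column `c`, since `k + c ≤ (L - 1) + (T - L) < T`.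
-/

open Matrix Finset

section LTI

variable {R : Type*} [CommRing R] {ι κ ο : Type*} [Fintype ι] [DecidableEq ι] [Fintype κ]

theorem state_eq_pow_mulVec_add_sum {T : ℕ} (A : Matrix ι ι R) (B : Matrix ι κ R)
    (u : ℕ → κ → R) (x : ℕ → ι → R)
    (hx : ∀ t, t + 1 < T → x (t + 1) = A *ᵥ x t + B *ᵥ u t) {k c : ℕ} (hkc : k + c < T) :
    x (k + c) = A ^ k *ᵥ x c + ∑ j ∈ range k, (A ^ (k - j - 1) * B) *ᵥ u (j + c) := by
  induction k with
  | zero => simp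
  | succ k ih =>
    have hshift : ∀ j ∈ range k, A *ᵥ ((A ^ (k - j - 1) * B) *ᵥ u (j + c))
        = (A ^ (k + 1 - j - 1) * B) *ᵥ u (j + c) := fun j hj => by
      rw [mulVec_mulVec, ← Matrix.mul_assoc, ← pow_succ',
        show k - j - 1 + 1 = k + 1 - j - 1 by grind]
    rw [show k + 1 + c = k + c + 1 by omega, hx _ (by omega), ih (by omega), mulVec_add,
      mulVec_sum, sum_congr rfl hshift, mulVec_mulVec, ← pow_succ', sum_range_succ]
    simp only [show k + 1 - k - 1 = 0 by omega, pow_zero, Matrix.one_mul]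
    abel

theorem output_eq_pow_mulVec_add_sum {T : ℕ} (A : Matrix ι ι R) (B : Matrix ι κ R)
    (C : Matrix ο ι R) (D : Matrix ο κ R) (u : ℕ → κ → R) (x : ℕ → ι → R) (y : ℕ → ο → R)
    (hx : ∀ t, t + 1 < T → x (t + 1) = A *ᵥ x t + B *ᵥ u t)
    (hy : ∀ t, t < T → y t = C *ᵥ x t + D *ᵥ u t) {k c : ℕ} (hkc : k + c < T) :
    y (k + c) = (C * A ^ k) *ᵥ x c
      + ∑ j ∈ range k, (C * A ^ (k - j - 1) * B) *ᵥ u (j + c) + D *ᵥ u (k + c) := by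
  simp only [hy _ hkc, state_eq_pow_mulVec_add_sum A B u x hx hkc, mulVec_add, mulVec_sum,
    mulVec_mulVec, Matrix.mul_assoc]

end LTI

theorem Fin.sum_ite_eq_add_sum_range {M : Type*} [AddCommMonoid M] {L k : ℕ} (hk : k < L)
    (a b : ℕ → M) :
    ∑ j : Fin L, (if (j : ℕ) = k then a j else if (j : ℕ) < k then b j else 0)
      = a k + ∑ j ∈ range k, b j := by
  rw [Fin.sum_univ_eq_sum_range (fun j => if j = k then a j else if j < k then b j else 0),
    ← sum_subset (range_subset_range.mpr hk) fun j _ hj => ?_, sum_range_succ, if_pos rfl,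
    add_comm]
  · congr 1
    exact sum_congr rfl fun j hj => by grind
  · grind

theorem sum_bigM_inr_inr_mul {n m p L : ℕ}
    (A : Matrix (Fin n) (Fin n) ℝ) (B : Matrix (Fin n) (Fin m) ℝ)
    (C : Matrix (Fin p) (Fin n) ℝ) (D : Matrix (Fin p) (Fin m) ℝ)
    (k : Fin L) (o : Fin p) (j : Fin L) (v : Fin m → ℝ) :
    ∑ i, bigM n m p L A B C D (Sum.inr (k, o)) (Sum.inr (j, i)) * v i
      = if (j : ℕ) = k then (D *ᵥ v) o
        else if (j : ℕ) < k then ((C * A ^ ((k : ℕ) - j - 1) * B) *ᵥ v) o else 0 := by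
  simp only [bigM]
  split_ifs <;> simp [mulVec, dotProduct]

theorem bigM_mul_stackedXU_general (n m p L T : ℕ) (hLT : L ≤ T)
    (A : Matrix (Fin n) (Fin n) ℝ) (B : Matrix (Fin n) (Fin m) ℝ)
    (C : Matrix (Fin p) (Fin n) ℝ) (D : Matrix (Fin p) (Fin m) ℝ)
    (u : ℕ → Fin m → ℝ) (x : ℕ → Fin n → ℝ) (y : ℕ → Fin p → ℝ)
    (hx : ∀ t, t + 1 < T → x (t + 1) = A.mulVec (x t) + B.mulVec (u t))
    (hy : ∀ t, t < T → y t = C.mulVec (x t) + D.mulVec (u t)) :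
    bigM n m p L A B C D * stackedXU n m L T x u = stackedUY m p L T u y := by
  ext (⟨k, i⟩ | ⟨k, o⟩) c
  · simp [Matrix.mul_apply, bigM, stackedXU, stackedUY]
  · have hkc : (k : ℕ) + c < T := by grind
    rw [Matrix.mul_apply, Fintype.sum_sum_type, Fintype.sum_prod_type]
    simp only [stackedXU, stackedUY, Sum.elim_inl, Sum.elim_inr, sum_bigM_inr_inr_mul,
      Fin.sum_ite_eq_add_sum_range k.isLt (fun j => (D *ᵥ u (j + c)) o)
        (fun j => ((C * A ^ ((k : ℕ) - j - 1) * B) *ᵥ u (j + c)) o),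
      output_eq_pow_mulVec_add_sum A B C D u x y hx hy hkc]
    simp only [bigM, Pi.add_apply, Finset.sum_apply, mulVec, dotProduct]
    ring

/-- For any input/state/output trajectory `(u, x, y)` on `{0,...,T-1}`, the identity
`[[0, I]; [O_L, T_L]] · [H_1(x_{[0,T-L]}); H_L(u_{[0,T-1]})] = [H_L(u); H_L(y)]` holds. -/
theorem bigM_mul_stackedXU (n m p L T : ℕ) (hL : 1 ≤ L) (hLT : L ≤ T)
    (A : Matrix (Fin n) (Fin n) ℝ) (B : Matrix (Fin n) (Fin m) ℝ)
    (C : Matrix (Fin p) (Fin n) ℝ) (D : Matrix (Fin p) (Fin m) ℝ)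
    (u : ℕ → Fin m → ℝ) (x : ℕ → Fin n → ℝ) (y : ℕ → Fin p → ℝ)
    (hx : ∀ t, t + 1 < T → x (t + 1) = A.mulVec (x t) + B.mulVec (u t))
    (hy : ∀ t, t < T → y t = C.mulVec (x t) + D.mulVec (u t)) :
    bigM n m p L A B C D * stackedXU n m L T x u = stackedUY m p L T u y :=
  bigM_mul_stackedXU_general n m p L T hLT A B C D u x y hx hy
end
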